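/- Let n ≥ 2 be an integer and let P be a real with 1/(n+1) < P ≤ 1. Define γ(P) = √(P/2 − 1/(2(n+1))) if 1/(n+1) < P ≤ (n+3)/(n+1)², and γ(P) = 1/(2n) + (1/2)·√((1 − 1/n)·(P − 1/n)) if (n+3)/(n+1)² ≤ P ≤ 1. Then the maximum of λ_1 − λ_{n+1} − 2·∑_{j=2}^n √(λ_j·λ_{2n+2−j}) over all λ ∈ ℝ^{2n} with λ_1 ≥ λ_2 ≥ … ≥ λ_{2n} ≥ 0, ∑_{k=1}^{2n} λ_k = 1 and ∑_{k=1}^{2n} λ_k² = P, is attained and equals 2·γ(P). Consequently, the maximal GM-concurrence attainable by an N-qubit X-state of purity P (n = 2^{N−1}) is 2·γ(P). -/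

import Mathlib

/-- The optimal value parameter `γ(P)` for the `N`-qubit X-MEMS with respect to purity `P`
(`n = 2^{N-1}`). -/
noncomputable def gammaP (n : ℕ) (P : ℝ) : ℝ :=
  if P ≤ ((n : ℝ) + 3) / ((n : ℝ) + 1) ^ 2 then
    Real.sqrt (P / 2 - 1 / (2 * ((n : ℝ) + 1)))
  else
    1 / (2 * (n : ℝ)) + (1 / 2) * Real.sqrt ((1 - 1 / (n : ℝ)) * (P - 1 / (n : ℝ)))

/-!
Write `a = λ₁`, `c = λ_{n+1}`, `u = a + c` and `Π = ∑_{j=2}^n λ_j λ_{2n+2-j}`. The trace and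
purity constraints, with Cauchy–Schwarz over the `n - 1` pairs `λ_j + λ_{2n+2-j}`, give
`(a - c)² - 4Π ≤ 2P - u² - 2(1 - u)²/(n - 1) = pairBound n P u`, and `∑ √(λ_j λ_{2n+2-j}) ≥ √Π`.
As `(a - c)² ≤ B² + 4Π` forces `a - c - 2√Π ≤ B`, it suffices that `pairBound n P u ≤ (2γ)²`
whenever `u ≥ a - c > 2γ`. Below the threshold `(n+3)/(n+1)²` this is the maximum
`2P - 2/(n+1)` of `pairBound`, attained at `u = 2/(n+1)`; above it `2γ ≥ 2/(n+1)` lies in the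
range where `pairBound` decreases, and `2γ` is its fixed point. Both values are attained by spectra
`(a, b, …, b, c, 0, …, 0)`, whose cross terms `λ_j λ_{2n+2-j}` all vanish.
-/

lemma Real.sqrt_sum_le_sum_sqrt {ι : Type*} (s : Finset ι) {f : ι → ℝ} (hf : ∀ i ∈ s, 0 ≤ f i) :
    √(∑ i ∈ s, f i) ≤ ∑ i ∈ s, √(f i) := by
  rw [Real.sqrt_le_left (Finset.sum_nonneg fun i _ ↦ Real.sqrt_nonneg _)]
  calc ∑ i ∈ s, f i = ∑ i ∈ s, √(f i) ^ 2 :=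
        Finset.sum_congr rfl fun i hi ↦ (Real.sq_sqrt (hf i hi)).symm
    _ ≤ (∑ i ∈ s, √(f i)) ^ 2 :=
        Finset.sum_sq_le_sq_sum_of_nonneg fun i _ ↦ Real.sqrt_nonneg _

lemma sub_two_mul_sqrt_le_of_sq_le {d B q : ℝ} (hB : 0 ≤ B) (hq : 0 ≤ q)
    (h : d ^ 2 ≤ B ^ 2 + 4 * q) : d - 2 * √q ≤ B := by
  have hsq := Real.sq_sqrt hq
  nlinarith [Real.sqrt_nonneg q, mul_nonneg hB (Real.sqrt_nonneg q)]

theorem Finset.sum_range_two_mul_eq_add_sum_pairs {M : Type*} [AddCommMonoid M] {n : ℕ}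
    (hn : 1 ≤ n) (g : ℕ → M) :
    ∑ k ∈ Finset.range (2 * n), g k
      = g 0 + g n + ∑ j ∈ Finset.Ico 1 n, (g j + g (2 * n - j)) := by
  have hreflect : ∑ j ∈ Finset.Ico 1 n, g (2 * n - j) = ∑ k ∈ Finset.Ico (n + 1) (2 * n), g k := by
    rw [Finset.sum_Ico_reflect g 1 (by omega : n ≤ 2 * n + 1),
      show 2 * n + 1 - n = n + 1 by omega, show 2 * n + 1 - 1 = 2 * n by omega]
  rw [Finset.sum_add_distrib, hreflect, Finset.range_eq_Ico,
    ← Finset.sum_Ico_consecutive g (by omega : 0 ≤ n + 1) (by omega : n + 1 ≤ 2 * n),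
    Finset.sum_Ico_succ_top (by omega : 0 ≤ n), Finset.sum_eq_sum_Ico_succ_bot (by omega : 0 < n)]
  abel

noncomputable def pairBound (m P u : ℝ) : ℝ :=
  2 * P - u ^ 2 - 2 * (1 - u) ^ 2 / (m - 1)

section pairBound

variable {m P : ℝ}

lemma pairBound_le (hm : 1 < m) (u : ℝ) : pairBound m P u ≤ 2 * P - 2 / (m + 1) := by
  have hm1 : m - 1 ≠ 0 := by linarith
  have key : 2 / (m + 1) - u ^ 2 - 2 * (1 - u) ^ 2 / (m - 1)
      = -((m + 1) * u - 2) ^ 2 / ((m + 1) * (m - 1)) := by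
    field_simp
    ring
  have : -((m + 1) * u - 2) ^ 2 / ((m + 1) * (m - 1)) ≤ 0 :=
    div_nonpos_of_nonpos_of_nonneg (neg_nonpos.2 (sq_nonneg _)) (by nlinarith)
  unfold pairBound
  linarith

lemma pairBound_le_pairBound (hm : 1 < m) {A u : ℝ} (hA : 2 / (m + 1) ≤ A) (hAu : A ≤ u) :
    pairBound m P u ≤ pairBound m P A := by
  have hm1 : m - 1 ≠ 0 := by linarith
  have key : pairBound m P A - pairBound m P u = (u - A) * ((m + 1) * (u + A) - 4) / (m - 1) := by
    unfold pairBound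
    field_simp
    ring
  have h4 : 4 ≤ (m + 1) * (u + A) := by
    rw [div_le_iff₀ (by linarith)] at hA
    nlinarith
  have : 0 ≤ (u - A) * ((m + 1) * (u + A) - 4) / (m - 1) :=
    div_nonneg (mul_nonneg (by linarith) (by linarith)) (by linarith)
  linarith

lemma sq_add_sq_div_eq_of_sq_eq (hm : 1 < m) {σ : ℝ} (hσ : σ ^ 2 = (1 - 1 / m) * (P - 1 / m)) :
    (1 / m + σ) ^ 2 + (1 - (1 / m + σ)) ^ 2 / (m - 1) = P := by
  have hm0 : m ≠ 0 := by positivity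
  have hm1 : m - 1 ≠ 0 := by linarith
  have hP : P = 1 / m + m * σ ^ 2 / (m - 1) := by
    rw [hσ]
    field_simp
    ring
  rw [hP]
  field_simp
  ring

lemma two_div_add_one_le_one_div_add_sqrt (hm : 1 < m) (hP : (m + 3) / (m + 1) ^ 2 < P) :
    2 / (m + 1) ≤ 1 / m + √((1 - 1 / m) * (P - 1 / m)) := by
  have hm0 : 0 < m := by linarith
  have hgap : 2 / (m + 1) - 1 / m = (m - 1) / (m * (m + 1)) := by
    field_simp
    ring
  have hsq : ((m - 1) / (m * (m + 1))) ^ 2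
      = (1 - 1 / m) * ((m + 3) / (m + 1) ^ 2 - 1 / m) := by
    field_simp
    ring
  have hle : (m - 1) / (m * (m + 1)) ≤ √((1 - 1 / m) * (P - 1 / m)) := by
    rw [Real.le_sqrt' (by apply div_pos <;> nlinarith), hsq]
    have : 0 ≤ 1 - 1 / m := by rw [sub_nonneg, div_le_one hm0]; exact hm.le
    gcongr
  linarith

end pairBound

lemma gammaP_nonneg (n : ℕ) (P : ℝ) : 0 ≤ gammaP n P := by
  unfold gammaP
  split_ifs <;> positivity

lemma pairBound_le_sq_two_mul_gammaP {n : ℕ} (hn : 2 ≤ n) {P : ℝ} (hP : 1 / ((n : ℝ) + 1) < P)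
    {u : ℝ} (hu : 2 * gammaP n P ≤ u) : pairBound n P u ≤ (2 * gammaP n P) ^ 2 := by
  have hm : (1 : ℝ) < n := by exact_mod_cast hn
  unfold gammaP at hu ⊢
  split_ifs at hu ⊢ with hregime
  · have hhalf : 1 / (2 * ((n : ℝ) + 1)) = 1 / ((n : ℝ) + 1) / 2 := by rw [div_div, mul_comm]
    have hrad : 0 ≤ P / 2 - 1 / (2 * ((n : ℝ) + 1)) := by
      rw [hhalf]
      linarith
    rw [mul_pow, Real.sq_sqrt hrad, hhalf]
    convert pairBound_le hm u using 1
    ring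
  · have hA : 2 * (1 / (2 * (n : ℝ)) + 1 / 2 * √((1 - 1 / n) * (P - 1 / n)))
        = 1 / n + √((1 - 1 / n) * (P - 1 / n)) := by ring
    rw [hA] at hu ⊢
    rw [not_le] at hregime
    have hthreshold : 1 / (n : ℝ) ≤ ((n : ℝ) + 3) / ((n : ℝ) + 1) ^ 2 := by
      rw [div_le_div_iff₀ (by positivity) (by positivity)]
      nlinarith
    have hrad : 0 ≤ (1 - 1 / (n : ℝ)) * (P - 1 / n) :=
      mul_nonneg (by rw [sub_nonneg, div_le_one (by positivity)]; exact hm.le) (by linarith)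
    have hfixed := sq_add_sq_div_eq_of_sq_eq hm (Real.sq_sqrt hrad)
    calc pairBound n P u
        ≤ pairBound n P (1 / n + √((1 - 1 / n) * (P - 1 / n))) :=
          pairBound_le_pairBound hm (two_div_add_one_le_one_div_add_sqrt hm hregime) hu
      _ = (1 / n + √((1 - 1 / n) * (P - 1 / n))) ^ 2 := by
          unfold pairBound
          rw [mul_div_assoc]
          linarith

/-- `lam k` stands for `λ_{k+1}`. -/
def IsOrderedSpectrum (n : ℕ) (P : ℝ) (lam : ℕ → ℝ) : Prop :=
  (∀ i j, i ≤ j → j < 2 * n → lam j ≤ lam i) ∧ (∀ i < 2 * n, 0 ≤ lam i) ∧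
    ∑ k ∈ Finset.range (2 * n), lam k = 1 ∧ ∑ k ∈ Finset.range (2 * n), lam k ^ 2 = P

noncomputable def xConcurrenceBound (n : ℕ) (lam : ℕ → ℝ) : ℝ :=
  lam 0 - lam n - 2 * ∑ j ∈ Finset.Ico 1 n, √(lam j * lam (2 * n - j))

section spectrum

variable {n : ℕ} {P : ℝ} {lam : ℕ → ℝ}

lemma sq_sub_le_pairBound_add (hn : 2 ≤ n) (hsum : ∑ k ∈ Finset.range (2 * n), lam k = 1)
    (hsq : ∑ k ∈ Finset.range (2 * n), lam k ^ 2 = P) :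
    (lam 0 - lam n) ^ 2 ≤ pairBound n P (lam 0 + lam n)
      + 4 * ∑ j ∈ Finset.Ico 1 n, lam j * lam (2 * n - j) := by
  have hm : (0 : ℝ) < n - 1 := by
    have : (2 : ℝ) ≤ n := by exact_mod_cast hn
    linarith
  rw [Finset.sum_range_two_mul_eq_add_sum_pairs (by omega)] at hsum hsq
  have hpairs : ∑ j ∈ Finset.Ico 1 n, (lam j + lam (2 * n - j)) ^ 2
      = ∑ j ∈ Finset.Ico 1 n, (lam j ^ 2 + lam (2 * n - j) ^ 2)
        + 2 * ∑ j ∈ Finset.Ico 1 n, lam j * lam (2 * n - j) := by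
    rw [Finset.mul_sum, ← Finset.sum_add_distrib]
    exact Finset.sum_congr rfl fun j _ ↦ by ring
  have hcard : ((Finset.Ico 1 n).card : ℝ) = n - 1 := by
    rw [Nat.card_Ico, Nat.cast_sub (by omega), Nat.cast_one]
  have hcs := sq_sum_le_card_mul_sum_sq (s := Finset.Ico 1 n)
    (f := fun j ↦ lam j + lam (2 * n - j))
  rw [hcard, show ∑ j ∈ Finset.Ico 1 n, (lam j + lam (2 * n - j)) = 1 - (lam 0 + lam n) by
    linarith, ← div_le_iff₀' hm] at hcs
  unfold pairBound
  rw [mul_div_assoc]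
  linarith

lemma xConcurrenceBound_le_sub_two_mul_sqrt
    (hprod : ∀ j ∈ Finset.Ico 1 n, 0 ≤ lam j * lam (2 * n - j)) :
    xConcurrenceBound n lam
      ≤ lam 0 - lam n - 2 * √(∑ j ∈ Finset.Ico 1 n, lam j * lam (2 * n - j)) := by
  have := Real.sqrt_sum_le_sum_sqrt (Finset.Ico 1 n) hprod
  unfold xConcurrenceBound
  linarith

theorem IsOrderedSpectrum.xConcurrenceBound_le (hn : 2 ≤ n) (hP : 1 / ((n : ℝ) + 1) < P)
    (hlam : IsOrderedSpectrum n P lam) : xConcurrenceBound n lam ≤ 2 * gammaP n P := by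
  obtain ⟨hsorted, hnonneg, hsum, hsq⟩ := hlam
  have hprod : ∀ j ∈ Finset.Ico 1 n, 0 ≤ lam j * lam (2 * n - j) := fun j hj ↦ by
    rw [Finset.mem_Ico] at hj
    exact mul_nonneg (hnonneg j (by omega)) (hnonneg _ (by omega))
  have hlast : 0 ≤ lam n := hnonneg n (by omega)
  have hgap : lam n ≤ lam 0 := hsorted 0 n (Nat.zero_le n) (by omega)
  refine (xConcurrenceBound_le_sub_two_mul_sqrt hprod).trans <|
    sub_two_mul_sqrt_le_of_sq_le (mul_nonneg zero_le_two (gammaP_nonneg n P))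
      (Finset.sum_nonneg hprod) ?_
  have hpair := sq_sub_le_pairBound_add hn hsum hsq
  rcases le_or_gt (lam 0 - lam n) (2 * gammaP n P) with hle | hlt
  · have := pow_le_pow_left₀ (by linarith) hle 2
    linarith [Finset.sum_nonneg hprod]
  · have := pairBound_le_sq_two_mul_gammaP hn hP (u := lam 0 + lam n) (by linarith)
    linarith

end spectrum

noncomputable def stepSpectrum (n : ℕ) (a b c : ℝ) : ℕ → ℝ := fun i ↦
  if i = 0 then a else if i < n then b else if i = n then c else 0

section stepSpectrum

variable {n : ℕ} {a b c : ℝ}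

lemma stepSpectrum_zero : stepSpectrum n a b c 0 = a := if_pos rfl

lemma stepSpectrum_of_pos_of_lt {i : ℕ} (h0 : 0 < i) (hi : i < n) : stepSpectrum n a b c i = b := by
  rw [stepSpectrum, if_neg h0.ne', if_pos hi]

lemma stepSpectrum_self (hn : 1 ≤ n) : stepSpectrum n a b c n = c := by
  rw [stepSpectrum, if_neg (by omega), if_neg (lt_irrefl n), if_pos rfl]

lemma stepSpectrum_of_lt {i : ℕ} (hi : n < i) : stepSpectrum n a b c i = 0 := by
  rw [stepSpectrum, if_neg (by omega), if_neg (by omega), if_neg (by omega)]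

lemma sum_range_two_mul_stepSpectrum (hn : 1 ≤ n) (a b c : ℝ) {φ : ℝ → ℝ} (hφ : φ 0 = 0) :
    ∑ k ∈ Finset.range (2 * n), φ (stepSpectrum n a b c k) = φ a + (n - 1) * φ b + φ c := by
  rw [Finset.sum_range_two_mul_eq_add_sum_pairs hn,
    Finset.sum_congr rfl (g := fun _ ↦ φ b) fun j hj ↦ by
      rw [Finset.mem_Ico] at hj
      rw [stepSpectrum_of_lt (by omega : n < 2 * n - j), hφ, add_zero,
        stepSpectrum_of_pos_of_lt hj.1 hj.2],
    Finset.sum_const, Nat.card_Ico, nsmul_eq_mul, Nat.cast_sub hn, Nat.cast_one,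
    stepSpectrum_zero, stepSpectrum_self hn]
  ring

lemma xConcurrenceBound_stepSpectrum (hn : 1 ≤ n) (a b c : ℝ) :
    xConcurrenceBound n (stepSpectrum n a b c) = a - c := by
  have hcross : ∑ j ∈ Finset.Ico 1 n,
      √(stepSpectrum n a b c j * stepSpectrum n a b c (2 * n - j)) = 0 :=
    Finset.sum_eq_zero fun j hj ↦ by
      rw [Finset.mem_Ico] at hj
      rw [stepSpectrum_of_lt (by omega : n < 2 * n - j), mul_zero, Real.sqrt_zero]
  rw [xConcurrenceBound, hcross, stepSpectrum_zero, stepSpectrum_self hn, mul_zero, sub_zero]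

lemma isOrderedSpectrum_stepSpectrum (hn : 1 ≤ n) {P : ℝ} (hba : b ≤ a) (hcb : c ≤ b)
    (hc : 0 ≤ c) (hsum : a + (n - 1) * b + c = 1) (hsq : a ^ 2 + (n - 1) * b ^ 2 + c ^ 2 = P) :
    IsOrderedSpectrum n P (stepSpectrum n a b c) := by
  refine ⟨fun i j hij _ ↦ ?_, fun i _ ↦ ?_, ?_, ?_⟩
  · simp only [stepSpectrum]
    split_ifs <;> first | linarith | omega
  · simp only [stepSpectrum]
    split_ifs <;> linarith
  · exact (sum_range_two_mul_stepSpectrum hn a b c (φ := fun t ↦ t) rfl).trans hsum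
  · exact (sum_range_two_mul_stepSpectrum hn a b c (φ := (· ^ 2)) (zero_pow two_ne_zero)).trans hsq

end stepSpectrum

section attainment

variable {n : ℕ} {P : ℝ}

lemma exists_isOrderedSpectrum_xConcurrenceBound_eq_two_mul_sqrt (hn : 1 ≤ n)
    (hP₀ : 1 / ((n : ℝ) + 1) ≤ P) (hP₁ : P ≤ ((n : ℝ) + 3) / ((n : ℝ) + 1) ^ 2) :
    ∃ lam, IsOrderedSpectrum n P lam ∧
      xConcurrenceBound n lam = 2 * √(P / 2 - 1 / (2 * ((n : ℝ) + 1))) := by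
  set x : ℝ := 1 / ((n : ℝ) + 1)
  have hx : ((n : ℝ) + 1) * x = 1 := mul_one_div_cancel (by positivity)
  have hthreshold : ((n : ℝ) + 3) / ((n : ℝ) + 1) ^ 2 = ((n : ℝ) + 3) * x ^ 2 := by
    rw [div_eq_mul_one_div, one_div_pow]
  rw [show 1 / (2 * ((n : ℝ) + 1)) = x / 2 by rw [div_div, mul_comm]]
  set γ := √(P / 2 - x / 2)
  have hγ : γ ^ 2 = P / 2 - x / 2 := Real.sq_sqrt (by linarith)
  have hγ0 : 0 ≤ γ := Real.sqrt_nonneg _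
  have hγx : γ ≤ x := by
    rw [Real.sqrt_le_left (by positivity)]
    nlinarith
  refine ⟨stepSpectrum n (x + γ) x (x - γ),
    isOrderedSpectrum_stepSpectrum hn (by linarith) (by linarith) (by linarith) ?_ ?_, ?_⟩
  · linear_combination hx
  · linear_combination 2 * hγ + x * hx
  · rw [xConcurrenceBound_stepSpectrum hn]
    ring

lemma exists_isOrderedSpectrum_xConcurrenceBound_eq_one_div_add_sqrt (hn : 2 ≤ n)
    (hP₀ : 1 / (n : ℝ) ≤ P) (hP₁ : P ≤ 1) :
    ∃ lam, IsOrderedSpectrum n P lam ∧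
      xConcurrenceBound n lam = 1 / n + √((1 - 1 / n) * (P - 1 / n)) := by
  have hm : (1 : ℝ) < n := by exact_mod_cast hn
  have hm1 : (0 : ℝ) < n - 1 := by linarith
  have hfrac : 1 / (n : ℝ) ≤ 1 := by rw [div_le_one (by positivity)]; exact hm.le
  have hrad : 0 ≤ (1 - 1 / (n : ℝ)) * (P - 1 / n) := mul_nonneg (by linarith) (by linarith)
  have hfixed := sq_add_sq_div_eq_of_sq_eq hm (Real.sq_sqrt hrad)
  set σ := √((1 - 1 / (n : ℝ)) * (P - 1 / n))
  have hσ : σ ≤ 1 - 1 / n := by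
    rw [Real.sqrt_le_left (by linarith), sq]
    exact mul_le_mul_of_nonneg_left (by linarith) (by linarith)
  have hnσ : 0 ≤ n * σ := mul_nonneg (Nat.cast_nonneg n) (Real.sqrt_nonneg _)
  refine ⟨stepSpectrum n (1 / n + σ) ((1 - (1 / n + σ)) / (n - 1)) 0,
    isOrderedSpectrum_stepSpectrum (by omega) ?_ (div_nonneg (by linarith) hm1.le) le_rfl ?_ ?_, ?_⟩
  · rw [div_le_iff₀ hm1]
    field_simp
    nlinarith
  · field_simp
    ring
  · rw [← hfixed]
    field_simp
    ring
  · rw [xConcurrenceBound_stepSpectrum (by omega), sub_zero]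

lemma exists_isOrderedSpectrum_xConcurrenceBound_eq_two_mul_gammaP (hn : 2 ≤ n)
    (hP₀ : 1 / ((n : ℝ) + 1) < P) (hP₁ : P ≤ 1) :
    ∃ lam, IsOrderedSpectrum n P lam ∧ xConcurrenceBound n lam = 2 * gammaP n P := by
  unfold gammaP
  split_ifs with hregime
  · exact exists_isOrderedSpectrum_xConcurrenceBound_eq_two_mul_sqrt (by omega) hP₀.le hregime
  · have hm : (1 : ℝ) ≤ n := by exact_mod_cast (by omega : 1 ≤ n)
    have hthreshold : 1 / (n : ℝ) ≤ ((n : ℝ) + 3) / ((n : ℝ) + 1) ^ 2 := by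
      rw [div_le_div_iff₀ (by positivity) (by positivity)]
      nlinarith
    obtain ⟨lam, hlam, hval⟩ :=
      exists_isOrderedSpectrum_xConcurrenceBound_eq_one_div_add_sqrt hn (by linarith) hP₁
    exact ⟨lam, hlam, by rw [hval]; ring⟩

end attainment

/-- For `1/(n+1) < P ≤ 1`, the maximum of
`λ_1 - λ_{n+1} - 2 ∑_{j=2}^n √(λ_j λ_{2n+2-j})` (0-based `lam`) over all sorted nonnegative
spectra `λ ∈ ℝ^{2n}` with `∑ λ_k = 1` and `∑ λ_k² = P` is attained and equals `2 γ(P)`: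
the maximal GM-concurrence of an `N`-qubit X-state of purity `P` is `2 γ(P)`. -/
theorem xmems_purity_max (n : ℕ) (hn : 2 ≤ n) (P : ℝ)
    (hP1 : 1 / ((n : ℝ) + 1) < P) (hP2 : P ≤ 1) :
    IsGreatest
      {v : ℝ | ∃ lam : ℕ → ℝ,
        (∀ i j, i ≤ j → j < 2 * n → lam j ≤ lam i) ∧
        (∀ i < 2 * n, 0 ≤ lam i) ∧
        (∑ k ∈ Finset.range (2 * n), lam k = 1) ∧
        (∑ k ∈ Finset.range (2 * n), (lam k) ^ 2 = P) ∧
        v = lam 0 - lam n -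
          2 * ∑ j ∈ Finset.Ico 1 n, Real.sqrt (lam j * lam (2 * n - j))}
      (2 * gammaP n P) := by
  constructor
  · obtain ⟨lam, ⟨hsorted, hnonneg, hsum, hsq⟩, hval⟩ :=
      exists_isOrderedSpectrum_xConcurrenceBound_eq_two_mul_gammaP hn hP1 hP2
    exact ⟨lam, hsorted, hnonneg, hsum, hsq, hval.symm⟩
  · rintro v ⟨lam, hsorted, hnonneg, hsum, hsq, rfl⟩
    exact IsOrderedSpectrum.xConcurrenceBound_le hn hP1 ⟨hsorted, hnonneg, hsum, hsq⟩
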